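/- arXiv:1611.08723 — 7 statements merged into one kernel-verified Lean document; each statement's English description precedes it below -/
import Mathlib

section
/- Suppose μ is a representing measure for β^{(2n)} and p is a bivariate real polynomial of degree ≤ n. Then the support of μ is contained in the zero set Z(p) = {(x,y) ∈ ℝ² : p(x,y) = 0} if and only if the coefficient vector p̂ of p lies in the kernel of the moment matrix M(n) (equivalently, the corresponding linear combination of columns of M(n) is zero). -/
open MeasureTheory MvPolynomial

/-- Index set for moments/monomials of degree at most `n`. -/
abbrev Idx (n : ℕ) := {p : Fin (n+1) × Fin (n+1) // (p.1 : ℕ) + (p.2 : ℕ) ≤ n}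

/-- The moment matrix `M(n)` associated with the sequence `β`. -/
noncomputable def momentMatrix (n : ℕ) (β : ℕ → ℕ → ℝ) : Matrix (Idx n) (Idx n) ℝ :=
  fun p q => β ((p.1.1 : ℕ) + (q.1.1 : ℕ)) ((p.1.2 : ℕ) + (q.1.2 : ℕ))

/-- Coefficient vector of a bivariate polynomial, indexed by monomials of degree ≤ n. -/
noncomputable def coeffVec (n : ℕ) (p : MvPolynomial (Fin 2) ℝ) : Idx n → ℝ :=
  fun q => p.coeff (Finsupp.single 0 (q.1.1 : ℕ) + Finsupp.single 1 (q.1.2 : ℕ))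

/-- The algebraic variety of the moment matrix `M(n)`. -/
def variety (n : ℕ) (β : ℕ → ℕ → ℝ) : Set (ℝ × ℝ) :=
  {z | ∀ p : MvPolynomial (Fin 2) ℝ, p.totalDegree ≤ n →
     (momentMatrix n β).mulVec (coeffVec n p) = 0 → eval ![z.1, z.2] p = 0}

/-- `μ` is a representing measure for the degree-`2n` moment sequence `β`. -/
def Represents (n : ℕ) (β : ℕ → ℕ → ℝ) (μ : Measure (ℝ × ℝ)) : Prop :=
  ∀ i j : ℕ, i + j ≤ 2 * n →
    Integrable (fun z : ℝ × ℝ => z.1 ^ i * z.2 ^ j) μ ∧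
    β i j = ∫ z : ℝ × ℝ, z.1 ^ i * z.2 ^ j ∂μ

/-- The Riesz functional associated with `β`. -/
noncomputable def riesz (β : ℕ → ℕ → ℝ) (p : MvPolynomial (Fin 2) ℝ) : ℝ :=
  ∑ d ∈ p.support, p.coeff d * β (d 0) (d 1)

/-- The closed support of a measure on `ℝ²`. -/
def msupport (μ : Measure (ℝ × ℝ)) : Set (ℝ × ℝ) :=
  {z | ∀ U : Set (ℝ × ℝ), IsOpen U → z ∈ U → μ U ≠ 0}

noncomputable def emb (n : ℕ) (q : Idx n) : Fin 2 →₀ ℕ :=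
  Finsupp.single 0 (q.1.1 : ℕ) + Finsupp.single 1 (q.1.2 : ℕ)

lemma emb_apply0 (n : ℕ) (q : Idx n) : emb n q 0 = (q.1.1 : ℕ) := by
  simp [emb, Finsupp.single_apply]

lemma emb_apply1 (n : ℕ) (q : Idx n) : emb n q 1 = (q.1.2 : ℕ) := by
  simp [emb, Finsupp.single_apply]

lemma emb_inj (n : ℕ) : Function.Injective (emb n) := by
  intro q r h
  have h0 : (q.1.1 : ℕ) = (r.1.1 : ℕ) := by
    rw [← emb_apply0 n q, ← emb_apply0 n r, h]
  have h1 : (q.1.2 : ℕ) = (r.1.2 : ℕ) := by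
    rw [← emb_apply1 n q, ← emb_apply1 n r, h]
  exact Subtype.ext (Prod.ext (Fin.val_injective h0) (Fin.val_injective h1))

lemma support_subset_image (n : ℕ) (p : MvPolynomial (Fin 2) ℝ) (hp : p.totalDegree ≤ n) :
    p.support ⊆ Finset.univ.image (emb n) := by
  intro d hd
  have hdeg : d 0 + d 1 ≤ n := by
    have := MvPolynomial.le_totalDegree hd
    have hsum : (d.sum fun _ e => e) = d 0 + d 1 := by
      rw [Finsupp.sum_fintype]
      · exact Fin.sum_univ_two d
      · intro; rfl
    omega
  refine Finset.mem_image.mpr ⟨⟨(⟨d 0, by omega⟩, ⟨d 1, by omega⟩), by simpa using hdeg⟩, Finset.mem_univ _, ?_⟩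
  ext i
  fin_cases i <;> simp [emb, Finsupp.single_apply]

/-- `P n p` : the polynomial function as explicit finite sum over `Idx n`. -/
noncomputable def P (n : ℕ) (p : MvPolynomial (Fin 2) ℝ) : ℝ × ℝ → ℝ :=
  fun z => ∑ q : Idx n, coeffVec n p q * (z.1 ^ (q.1.1 : ℕ) * z.2 ^ (q.1.2 : ℕ))

lemma eval_eq_P (n : ℕ) (p : MvPolynomial (Fin 2) ℝ) (hp : p.totalDegree ≤ n) (z : ℝ × ℝ) :
    eval ![z.1, z.2] p = P n p z := by
  rw [MvPolynomial.eval_eq']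
  have h1 : P n p z = ∑ d ∈ Finset.univ.image (emb n),
      p.coeff d * (z.1 ^ d 0 * z.2 ^ d 1) := by
    rw [Finset.sum_image (fun a _ b _ h => emb_inj n h)]
    apply Finset.sum_congr rfl
    intro q _
    rw [emb_apply0, emb_apply1]
    rfl
  rw [h1]
  rw [← Finset.sum_subset (support_subset_image n p hp)
    (fun d _ hd => by rw [MvPolynomial.notMem_support_iff.mp hd, zero_mul])]
  apply Finset.sum_congr rfl
  intro d _
  congr 1
  rw [Fin.prod_univ_two]
  simp

lemma continuous_P (n : ℕ) (p : MvPolynomial (Fin 2) ℝ) : Continuous (P n p) := by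
  apply continuous_finset_sum
  intro q _
  exact continuous_const.mul ((continuous_fst.pow _).mul (continuous_snd.pow _))


section Main
variable {n : ℕ} {β : ℕ → ℕ → ℝ} {μ : Measure (ℝ × ℝ)}

/-- each term `c_r * x^(k+r₁) y^(l+r₂)` is integrable when `k+l ≤ n`. -/
lemma integrable_term (hμ : Represents n β μ) (p : MvPolynomial (Fin 2) ℝ)
    {k l : ℕ} (hkl : k + l ≤ n) (r : Idx n) :
    Integrable (fun z : ℝ × ℝ =>
      coeffVec n p r * (z.1 ^ (k + (r.1.1 : ℕ)) * z.2 ^ (l + (r.1.2 : ℕ)))) μ := by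
  have hr := r.2
  exact ((hμ (k + (r.1.1 : ℕ)) (l + (r.1.2 : ℕ)) (by omega)).1).const_mul _

lemma mono_mul_P (p : MvPolynomial (Fin 2) ℝ) (k l : ℕ) (z : ℝ × ℝ) :
    z.1 ^ k * z.2 ^ l * P n p z
      = ∑ r : Idx n, coeffVec n p r * (z.1 ^ (k + (r.1.1 : ℕ)) * z.2 ^ (l + (r.1.2 : ℕ))) := by
  rw [P, Finset.mul_sum]
  apply Finset.sum_congr rfl
  intro r _
  rw [pow_add, pow_add]
  ring

lemma integrable_mono_mul_P (hμ : Represents n β μ) (p : MvPolynomial (Fin 2) ℝ)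
    {k l : ℕ} (hkl : k + l ≤ n) :
    Integrable (fun z : ℝ × ℝ => z.1 ^ k * z.2 ^ l * P n p z) μ := by
  have : (fun z : ℝ × ℝ => z.1 ^ k * z.2 ^ l * P n p z)
      = fun z => ∑ r : Idx n, coeffVec n p r * (z.1 ^ (k + (r.1.1 : ℕ)) * z.2 ^ (l + (r.1.2 : ℕ))) :=
    funext (mono_mul_P p k l)
  rw [this]
  exact integrable_finset_sum _ (fun r _ => integrable_term hμ p hkl r)

/-- Lemma B : entries of `M p̂` are integrals of monomial times `p`. -/
lemma mulVec_eq_integral (hμ : Represents n β μ) (p : MvPolynomial (Fin 2) ℝ) (q : Idx n) :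
    (momentMatrix n β).mulVec (coeffVec n p) q
      = ∫ z : ℝ × ℝ, z.1 ^ (q.1.1 : ℕ) * z.2 ^ (q.1.2 : ℕ) * P n p z ∂μ := by
  have hq := q.2
  have h1 : ∀ z : ℝ × ℝ, z.1 ^ (q.1.1 : ℕ) * z.2 ^ (q.1.2 : ℕ) * P n p z
      = ∑ r : Idx n, coeffVec n p r *
          (z.1 ^ ((q.1.1 : ℕ) + (r.1.1 : ℕ)) * z.2 ^ ((q.1.2 : ℕ) + (r.1.2 : ℕ))) :=
    mono_mul_P p _ _
  rw [integral_congr_ae (Filter.EventuallyEq.of_eq (funext h1)),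
    integral_finset_sum _ (fun r _ => integrable_term hμ p hq r)]
  rw [Matrix.mulVec, dotProduct]
  apply Finset.sum_congr rfl
  intro r _
  have hr := r.2
  rw [integral_const_mul _ _, momentMatrix,
    ← (hμ ((q.1.1 : ℕ) + (r.1.1 : ℕ)) ((q.1.2 : ℕ) + (r.1.2 : ℕ)) (by omega)).2, mul_comm]

/-- Lemma C : `∫ p² = ⟨p̂, M p̂⟩`. -/
lemma integral_sq (hμ : Represents n β μ) (p : MvPolynomial (Fin 2) ℝ) :
    ∫ z : ℝ × ℝ, (P n p z) ^ 2 ∂μ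
      = ∑ q : Idx n, coeffVec n p q * (momentMatrix n β).mulVec (coeffVec n p) q := by
  have h1 : ∀ z : ℝ × ℝ, (P n p z) ^ 2
      = ∑ q : Idx n, coeffVec n p q *
          (z.1 ^ (q.1.1 : ℕ) * z.2 ^ (q.1.2 : ℕ) * P n p z) := by
    intro z
    rw [pow_two]
    nth_rewrite 1 [P]
    rw [Finset.sum_mul]
    apply Finset.sum_congr rfl
    intro q _
    ring
  rw [integral_congr_ae (Filter.EventuallyEq.of_eq (funext h1)),
    integral_finset_sum _ (fun q _ => ((integrable_mono_mul_P hμ p q.2).const_mul _))]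
  apply Finset.sum_congr rfl
  intro q _
  rw [integral_const_mul _ _, mulVec_eq_integral hμ p q]

end Main

/-- `supp μ ⊆ Z(p)` iff `p̂ ∈ ker M(n)`. -/
theorem msupport_subset_zeroSet_iff (n : ℕ) (β : ℕ → ℕ → ℝ) (μ : Measure (ℝ × ℝ))
    (hμ : Represents n β μ) (p : MvPolynomial (Fin 2) ℝ) (hp : p.totalDegree ≤ n) :
    msupport μ ⊆ {z : ℝ × ℝ | eval ![z.1, z.2] p = 0} ↔
      (momentMatrix n β).mulVec (coeffVec n p) = 0 := by
  have hPeq : ∀ z : ℝ × ℝ, eval ![z.1, z.2] p = P n p z := eval_eq_P n p hp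
  constructor
  · intro hsub
    have hnull : μ {z : ℝ × ℝ | P n p z ≠ 0} = 0 := by
      apply measure_null_of_locally_null
      intro x hx
      have hxns : x ∉ msupport μ := fun hxs => hx (by rw [← hPeq x]; exact hsub hxs)
      simp only [msupport, Set.mem_setOf_eq, not_forall] at hxns
      obtain ⟨U, hUo, hxU, hU0⟩ := hxns
      push_neg at hU0
      exact ⟨U, mem_nhdsWithin_of_mem_nhds (hUo.mem_nhds hxU), hU0⟩
    have hae : (fun z : ℝ × ℝ => P n p z) =ᵐ[μ] 0 := by
      rw [Filter.eventuallyEq_iff_exists_mem]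
      exact ⟨{z | P n p z = 0}, by rwa [mem_ae_iff, show {z : ℝ × ℝ | P n p z = 0}ᶜ
        = {z : ℝ × ℝ | P n p z ≠ 0} from rfl], fun z hz => hz⟩
    funext q
    rw [mulVec_eq_integral hμ p q]
    have : (fun z : ℝ × ℝ => z.1 ^ (q.1.1 : ℕ) * z.2 ^ (q.1.2 : ℕ) * P n p z) =ᵐ[μ] 0 := by
      filter_upwards [hae] with z hz
      simp only [Pi.zero_apply] at hz ⊢
      rw [hz, mul_zero]
    rw [integral_congr_ae this]
    simp
  · intro hker
    have hintsq : Integrable (fun z : ℝ × ℝ => (P n p z) ^ 2) μ := by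
      have h1 : (fun z : ℝ × ℝ => (P n p z) ^ 2)
          = fun z => ∑ q : Idx n, coeffVec n p q *
              (z.1 ^ (q.1.1 : ℕ) * z.2 ^ (q.1.2 : ℕ) * P n p z) := by
        funext z
        rw [pow_two]
        nth_rewrite 1 [P]
        rw [Finset.sum_mul]
        exact Finset.sum_congr rfl fun q _ => by ring
      rw [h1]
      exact integrable_finset_sum _ fun q _ => (integrable_mono_mul_P hμ p q.2).const_mul _
    have hzero : ∫ z : ℝ × ℝ, (P n p z) ^ 2 ∂μ = 0 := by
      rw [integral_sq hμ p, hker]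
      simp
    have hae : (fun z : ℝ × ℝ => (P n p z) ^ 2) =ᵐ[μ] 0 :=
      (integral_eq_zero_iff_of_nonneg (fun z => sq_nonneg _) hintsq).mp hzero
    have hnull : μ {z : ℝ × ℝ | P n p z ≠ 0} = 0 := by
      have := hae
      rw [Filter.EventuallyEq, ae_iff] at this
      convert this using 2
      ext z
      simp [pow_eq_zero_iff]
    intro z hz
    simp only [Set.mem_setOf_eq, hPeq z]
    by_contra h0
    exact hz {w | P n p w ≠ 0}
      ((isOpen_compl_singleton).preimage (continuous_P n p)) h0 hnull
end

section
/- If β^{(2n)} admits a representing measure, then β is recursively generated: whenever f, g, and fg all have degree ≤ n and the coefficient vector of f lies in ker M(n), then the coefficient vector of fg also lies in ker M(n). -/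
open MeasureTheory MvPolynomial

/-! ### Auxiliary lemmas -/

lemma fin2_eq (d : Fin 2 →₀ ℕ) : d = Finsupp.single 0 (d 0) + Finsupp.single 1 (d 1) := by
  ext i; fin_cases i <;> simp

lemma deg_mem {n : ℕ} {p : MvPolynomial (Fin 2) ℝ} (hp : p.totalDegree ≤ n) {d : Fin 2 →₀ ℕ}
    (hd : d ∈ p.support) : (d 0 : ℕ) + d 1 ≤ n := by
  have h := MvPolynomial.le_totalDegree hd
  have h2 : (d.sum fun _ e => e) = d 0 + d 1 := by
    rw [Finsupp.sum_fintype _ _ (fun _ => rfl), Fin.sum_univ_two]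
  omega

lemma mulVec_eq_sum (n : ℕ) (β : ℕ → ℕ → ℝ) (p : MvPolynomial (Fin 2) ℝ)
    (hp : p.totalDegree ≤ n) (q : Idx n) :
    (momentMatrix n β).mulVec (coeffVec n p) q
      = ∑ d ∈ p.support, p.coeff d * β ((q.1.1 : ℕ) + d 0) ((q.1.2 : ℕ) + d 1) := by
  classical
  set e : Idx n → (Fin 2 →₀ ℕ) := fun q' =>
    Finsupp.single 0 (q'.1.1 : ℕ) + Finsupp.single 1 (q'.1.2 : ℕ) with he
  have he0 : ∀ q', (e q') 0 = (q'.1.1 : ℕ) := by intro q'; simp [he]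
  have he1 : ∀ q', (e q') 1 = (q'.1.2 : ℕ) := by intro q'; simp [he]
  have einj : Function.Injective e := by
    intro a b hab
    have h0 := congrArg (fun d => d 0) hab
    have h1 := congrArg (fun d => d 1) hab
    simp only [he0, he1] at h0 h1
    exact Subtype.ext (Prod.ext (Fin.ext h0) (Fin.ext h1))
  have hsub : p.support ⊆ Finset.univ.image e := by
    intro d hd
    have hle := deg_mem hp hd
    refine Finset.mem_image.mpr ⟨⟨(⟨d 0, ?_⟩, ⟨d 1, ?_⟩), ?_⟩, Finset.mem_univ _, ?_⟩
    · omega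
    · omega
    · exact hle
    · simp [he]; exact (fin2_eq d).symm
  calc (momentMatrix n β).mulVec (coeffVec n p) q
      = ∑ q' : Idx n, p.coeff (e q') * β ((q.1.1 : ℕ) + (e q') 0) ((q.1.2 : ℕ) + (e q') 1) := by
        simp only [Matrix.mulVec, dotProduct, momentMatrix, coeffVec, he0, he1]
        simp only [he]; exact Finset.sum_congr rfl fun q' _ => mul_comm _ _
    _ = ∑ d ∈ Finset.univ.image e, p.coeff d * β ((q.1.1 : ℕ) + d 0) ((q.1.2 : ℕ) + d 1) := by
        rw [Finset.sum_image (fun a _ b _ h => einj h)]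
    _ = ∑ d ∈ p.support, p.coeff d * β ((q.1.1 : ℕ) + d 0) ((q.1.2 : ℕ) + d 1) := by
        refine (Finset.sum_subset hsub fun d _ hd => ?_).symm
        rw [MvPolynomial.notMem_support_iff.mp hd, zero_mul]

lemma fun_expand (p : MvPolynomial (Fin 2) ℝ) (i j : ℕ) :
    (fun z : ℝ × ℝ => z.1 ^ i * z.2 ^ j * eval ![z.1, z.2] p)
      = fun z : ℝ × ℝ => ∑ d ∈ p.support, p.coeff d * (z.1 ^ (i + d 0) * z.2 ^ (j + d 1)) := by
  funext z
  rw [MvPolynomial.eval_eq', Finset.mul_sum]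
  refine Finset.sum_congr rfl fun d _ => ?_
  rw [Fin.prod_univ_two]
  simp only [Matrix.cons_val_zero, Matrix.cons_val_one, Matrix.head_cons]
  rw [pow_add, pow_add]; ring

lemma momC {n : ℕ} {β : ℕ → ℕ → ℝ} {μ : Measure (ℝ × ℝ)} (hμ : Represents n β μ)
    {p : MvPolynomial (Fin 2) ℝ} (hp : p.totalDegree ≤ n) {i j : ℕ} (hij : i + j ≤ n) :
    Integrable (fun z : ℝ × ℝ => z.1 ^ i * z.2 ^ j * eval ![z.1, z.2] p) μ ∧
    ∫ z : ℝ × ℝ, z.1 ^ i * z.2 ^ j * eval ![z.1, z.2] p ∂μ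
      = ∑ d ∈ p.support, p.coeff d * β (i + d 0) (j + d 1) := by
  rw [fun_expand]
  have hle : ∀ d ∈ p.support, (i + d 0) + (j + d 1) ≤ 2 * n := by
    intro d hd; have := deg_mem hp hd; omega
  have hint : ∀ d ∈ p.support,
      Integrable (fun z : ℝ × ℝ => p.coeff d * (z.1 ^ (i + d 0) * z.2 ^ (j + d 1))) μ :=
    fun d hd => ((hμ _ _ (hle d hd)).1).const_mul _
  refine ⟨integrable_finset_sum _ hint, ?_⟩
  rw [integral_finset_sum _ hint]
  refine Finset.sum_congr rfl fun d hd => ?_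
  rw [integral_const_mul, ← (hμ _ _ (hle d hd)).2]

lemma sq_expand (f : MvPolynomial (Fin 2) ℝ) :
    (fun z : ℝ × ℝ => (eval ![z.1, z.2] f) ^ 2)
      = fun z : ℝ × ℝ => ∑ d ∈ f.support,
          f.coeff d * (z.1 ^ (d 0) * z.2 ^ (d 1) * eval ![z.1, z.2] f) := by
  funext z
  rw [sq]
  nth_rewrite 1 [MvPolynomial.eval_eq']
  rw [Finset.sum_mul]
  refine Finset.sum_congr rfl fun d _ => ?_
  rw [Fin.prod_univ_two]
  simp only [Matrix.cons_val_zero, Matrix.cons_val_one, Matrix.head_cons]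
  ring

/-- a moment sequence with a representing measure is recursively generated. -/
theorem recursively_generated_of_represents (n : ℕ) (β : ℕ → ℕ → ℝ) (μ : Measure (ℝ × ℝ))
    (hμ : Represents n β μ) (f g : MvPolynomial (Fin 2) ℝ)
    (hf : f.totalDegree ≤ n) (hg : g.totalDegree ≤ n) (hfg : (f * g).totalDegree ≤ n)
    (hker : (momentMatrix n β).mulVec (coeffVec n f) = 0) :
    (momentMatrix n β).mulVec (coeffVec n (f * g)) = 0 := by
  classical
  -- Step 1: all moment integrals against f vanish
  have h0 : ∀ i j : ℕ, i + j ≤ n →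
      ∫ z : ℝ × ℝ, z.1 ^ i * z.2 ^ j * eval ![z.1, z.2] f ∂μ = 0 := by
    intro i j hij
    have hi : i < n + 1 := by omega
    have hj : j < n + 1 := by omega
    set q : Idx n := ⟨(⟨i, hi⟩, ⟨j, hj⟩), hij⟩ with hq
    have hz := congrFun hker q
    rw [mulVec_eq_sum n β f hf q] at hz
    rw [(momC hμ hf hij).2]
    exact hz
  -- Step 2: ∫ (eval f)² dμ = 0
  have hintf : ∀ d ∈ f.support,
      Integrable (fun z : ℝ × ℝ =>
        f.coeff d * (z.1 ^ (d 0) * z.2 ^ (d 1) * eval ![z.1, z.2] f)) μ :=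
    fun d hd => ((momC hμ hf (deg_mem hf hd)).1).const_mul _
  have hsqint : Integrable (fun z : ℝ × ℝ => (eval ![z.1, z.2] f) ^ 2) μ := by
    rw [sq_expand]; exact integrable_finset_sum _ hintf
  have hsq0 : ∫ z : ℝ × ℝ, (eval ![z.1, z.2] f) ^ 2 ∂μ = 0 := by
    rw [sq_expand, integral_finset_sum _ hintf]
    refine Finset.sum_eq_zero fun d hd => ?_
    rw [integral_const_mul, h0 _ _ (deg_mem hf hd), mul_zero]
  -- Step 3: eval f = 0 a.e.
  have hae : ∀ᵐ z : ℝ × ℝ ∂μ, eval ![z.1, z.2] f = 0 := by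
    have hnn : (0 : ℝ × ℝ → ℝ) ≤ fun z : ℝ × ℝ => (eval ![z.1, z.2] f) ^ 2 :=
      fun z => sq_nonneg _
    have hae0 := (integral_eq_zero_iff_of_nonneg hnn hsqint).mp hsq0
    filter_upwards [hae0] with z hz
    exact sq_eq_zero_iff.mp hz
  -- Step 4: conclude
  funext q
  rw [mulVec_eq_sum n β (f * g) hfg q, ← (momC hμ hfg q.2).2]
  have hae2 : (fun z : ℝ × ℝ => z.1 ^ (q.1.1 : ℕ) * z.2 ^ (q.1.2 : ℕ) * eval ![z.1, z.2] (f * g))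
      =ᵐ[μ] (fun _ => (0 : ℝ)) := by
    filter_upwards [hae] with z hz
    rw [map_mul, hz, zero_mul, mul_zero]
  rw [integral_congr_ae hae2, integral_zero]
  rfl
end

section
/- If β^{(2n)} admits a representing measure, then β is weakly consistent: every polynomial p of degree ≤ n that vanishes identically on the algebraic variety V(M(n)) has coefficient vector in the kernel of M(n). -/
open MeasureTheory MvPolynomial

set_option maxHeartbeats 1000000

namespace WCaux

noncomputable def ι (n : ℕ) (e : Idx n) : Fin 2 →₀ ℕ :=
  Finsupp.single 0 (e.1.1 : ℕ) + Finsupp.single 1 (e.1.2 : ℕ)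

lemma ι_zero (n : ℕ) (e : Idx n) : ι n e 0 = (e.1.1 : ℕ) := by
  simp [ι, Finsupp.single_apply]

lemma ι_one (n : ℕ) (e : Idx n) : ι n e 1 = (e.1.2 : ℕ) := by
  simp [ι, Finsupp.single_apply]

lemma decomp (d : Fin 2 →₀ ℕ) :
    d = Finsupp.single 0 (d 0) + Finsupp.single 1 (d 1) := by
  ext i
  fin_cases i <;> simp [Finsupp.single_apply]

lemma coeffVec_eq (n : ℕ) (q : MvPolynomial (Fin 2) ℝ) (e : Idx n) :
    coeffVec n q e = q.coeff (ι n e) := rfl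

lemma deg_bound' {q : MvPolynomial (Fin 2) ℝ} {d : Fin 2 →₀ ℕ}
    (hd : d ∈ q.support) : d 0 + d 1 ≤ q.totalDegree := by
  have h1 : d.sum (fun _ e => e) ≤ q.totalDegree := le_totalDegree hd
  have h2 : d.sum (fun _ e => e) = d 0 + d 1 := by
    rw [Finsupp.sum_fintype _ _ (fun _ => rfl), Fin.sum_univ_two]
  omega

lemma sum_idx {n : ℕ} {q : MvPolynomial (Fin 2) ℝ} (hq : q.totalDegree ≤ n)
    (f : ℕ → ℕ → ℝ) :
    ∑ e : Idx n, q.coeff (ι n e) * f (e.1.1 : ℕ) (e.1.2 : ℕ)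
      = ∑ d ∈ q.support, q.coeff d * f (d 0) (d 1) := by
  have hinj : ∀ e ∈ (Finset.univ : Finset (Idx n)), ∀ e' ∈ Finset.univ,
      ι n e = ι n e' → e = e' := by
    intro e _ e' _ h
    have h0 : (e.1.1 : ℕ) = (e'.1.1 : ℕ) := by rw [← ι_zero n e, ← ι_zero n e', h]
    have h1 : (e.1.2 : ℕ) = (e'.1.2 : ℕ) := by rw [← ι_one n e, ← ι_one n e', h]
    apply Subtype.ext
    exact Prod.ext (Fin.ext h0) (Fin.ext h1)
  have himg : q.support ⊆ Finset.univ.image (ι n) := by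
    intro d hd
    have hb : d 0 + d 1 ≤ n := le_trans (deg_bound' hd) hq
    refine Finset.mem_image.mpr ⟨⟨(⟨d 0, by omega⟩, ⟨d 1, by omega⟩), by simpa using hb⟩,
      Finset.mem_univ _, ?_⟩
    simp only [ι]
    exact (decomp d).symm
  calc ∑ e : Idx n, q.coeff (ι n e) * f (e.1.1 : ℕ) (e.1.2 : ℕ)
      = ∑ e : Idx n, q.coeff (ι n e) * f (ι n e 0) (ι n e 1) := by
        refine Finset.sum_congr rfl fun e _ => by rw [ι_zero, ι_one]
    _ = ∑ d ∈ Finset.univ.image (ι n), q.coeff d * f (d 0) (d 1) :=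
        (Finset.sum_image (f := fun d => q.coeff d * f (d 0) (d 1)) hinj).symm
    _ = ∑ d ∈ q.support, q.coeff d * f (d 0) (d 1) := by
        refine (Finset.sum_subset himg fun d _ hd => ?_).symm
        rw [MvPolynomial.notMem_support_iff.mp hd, zero_mul]

lemma eval_eq_sum' (q : MvPolynomial (Fin 2) ℝ) (z : ℝ × ℝ) :
    eval ![z.1, z.2] q = ∑ d ∈ q.support, q.coeff d * (z.1 ^ d 0 * z.2 ^ d 1) := by
  rw [eval_eq]
  refine Finset.sum_congr rfl fun d _ => ?_
  congr 1
  rw [show (∏ i ∈ d.support, ![z.1, z.2] i ^ d i) = ∏ i : Fin 2, ![z.1, z.2] i ^ d i from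
    Finset.prod_subset (Finset.subset_univ _)
      (fun i _ hi => by rw [Finsupp.notMem_support_iff.mp hi, pow_zero]),
    Fin.prod_univ_two]
  simp

lemma key_fun_eq (q : MvPolynomial (Fin 2) ℝ) (i j : ℕ) :
    (fun z : ℝ × ℝ => z.1 ^ i * z.2 ^ j * eval ![z.1, z.2] q)
      = fun z => ∑ d ∈ q.support, q.coeff d * (z.1 ^ (i + d 0) * z.2 ^ (j + d 1)) := by
  funext z
  rw [eval_eq_sum', Finset.mul_sum]
  refine Finset.sum_congr rfl fun d _ => ?_
  rw [pow_add, pow_add]; ring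

lemma integrable_key {n : ℕ} {β : ℕ → ℕ → ℝ} {μ : Measure (ℝ × ℝ)}
    (hμ : Represents n β μ) {q : MvPolynomial (Fin 2) ℝ} {i j : ℕ}
    (h : i + j + q.totalDegree ≤ 2 * n) :
    Integrable (fun z : ℝ × ℝ => z.1 ^ i * z.2 ^ j * eval ![z.1, z.2] q) μ := by
  rw [key_fun_eq]
  refine integrable_finset_sum _ fun d hd => ?_
  have hb := deg_bound' hd
  exact ((hμ (i + d 0) (j + d 1) (by omega)).1).const_mul _

lemma integral_key {n : ℕ} {β : ℕ → ℕ → ℝ} {μ : Measure (ℝ × ℝ)}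
    (hμ : Represents n β μ) {q : MvPolynomial (Fin 2) ℝ} {i j : ℕ}
    (h : i + j + q.totalDegree ≤ 2 * n) :
    ∫ z : ℝ × ℝ, z.1 ^ i * z.2 ^ j * eval ![z.1, z.2] q ∂μ
      = ∑ d ∈ q.support, q.coeff d * β (i + d 0) (j + d 1) := by
  rw [key_fun_eq]
  have hint : ∀ d ∈ q.support,
      Integrable (fun z : ℝ × ℝ => q.coeff d * (z.1 ^ (i + d 0) * z.2 ^ (j + d 1))) μ := by
    intro d hd
    have hb := deg_bound' hd
    exact ((hμ (i + d 0) (j + d 1) (by omega)).1).const_mul _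
  rw [integral_finset_sum _ hint]
  refine Finset.sum_congr rfl fun d hd => ?_
  have hb := deg_bound' hd
  rw [integral_const_mul, ← (hμ (i + d 0) (j + d 1) (by omega)).2]

lemma mulVec_eq {n : ℕ} {β : ℕ → ℕ → ℝ} {μ : Measure (ℝ × ℝ)}
    (hμ : Represents n β μ) {q : MvPolynomial (Fin 2) ℝ} (hq : q.totalDegree ≤ n)
    (e : Idx n) :
    (momentMatrix n β).mulVec (coeffVec n q) e
      = ∫ z : ℝ × ℝ, z.1 ^ (e.1.1 : ℕ) * z.2 ^ (e.1.2 : ℕ) * eval ![z.1, z.2] q ∂μ := by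
  have he : (e.1.1 : ℕ) + (e.1.2 : ℕ) ≤ n := e.2
  rw [integral_key hμ (by omega)]
  have h1 : (momentMatrix n β).mulVec (coeffVec n q) e
      = ∑ e' : Idx n, q.coeff (ι n e')
          * β ((e.1.1 : ℕ) + (e'.1.1 : ℕ)) ((e.1.2 : ℕ) + (e'.1.2 : ℕ)) := by
    simp only [Matrix.mulVec, dotProduct, momentMatrix, coeffVec_eq]
    exact Finset.sum_congr rfl fun e' _ => mul_comm _ _
  rw [h1]
  exact sum_idx hq (fun a b => β ((e.1.1 : ℕ) + a) ((e.1.2 : ℕ) + b))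

lemma compl_msupport_null (μ : Measure (ℝ × ℝ)) : μ (msupport μ)ᶜ = 0 := by
  refine measure_null_of_locally_null _ fun x hx => ?_
  simp only [msupport, Set.mem_compl_iff, Set.mem_setOf_eq] at hx
  push_neg at hx
  obtain ⟨U, hUopen, hxU, hU⟩ := hx
  exact ⟨U, mem_nhdsWithin_of_mem_nhds (hUopen.mem_nhds hxU), hU⟩


lemma continuous_evalp (q : MvPolynomial (Fin 2) ℝ) :
    Continuous fun z : ℝ × ℝ => eval ![z.1, z.2] q := by
  have h : (fun z : ℝ × ℝ => eval ![z.1, z.2] q)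
      = fun z => ∑ d ∈ q.support, q.coeff d * (z.1 ^ d 0 * z.2 ^ d 1) := by
    funext z; exact eval_eq_sum' q z
  rw [h]
  exact continuous_finset_sum _ fun d _ =>
    continuous_const.mul ((continuous_fst.pow _).mul (continuous_snd.pow _))

lemma eval_eq_sum_idx {n : ℕ} {q : MvPolynomial (Fin 2) ℝ} (hq : q.totalDegree ≤ n)
    (z : ℝ × ℝ) :
    eval ![z.1, z.2] q
      = ∑ e : Idx n, coeffVec n q e * (z.1 ^ (e.1.1 : ℕ) * z.2 ^ (e.1.2 : ℕ)) := by
  rw [eval_eq_sum', ← sum_idx hq (fun a b => z.1 ^ a * z.2 ^ b)]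
  exact Finset.sum_congr rfl fun e _ => rfl

lemma msupport_subset {n : ℕ} {β : ℕ → ℕ → ℝ} {μ : Measure (ℝ × ℝ)}
    (hμ : Represents n β μ) : msupport μ ⊆ variety n β := by
  intro z hz q hq hker
  by_contra hne
  set F : ℝ × ℝ → ℝ := fun w => eval ![w.1, w.2] q with hF
  -- square as a sum against the moment matrix
  have hsq : ∀ w : ℝ × ℝ, F w * F w
      = ∑ e : Idx n, coeffVec n q e
          * (w.1 ^ (e.1.1 : ℕ) * w.2 ^ (e.1.2 : ℕ) * F w) := by
    intro w
    calc F w * F w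
        = (∑ e : Idx n, coeffVec n q e * (w.1 ^ (e.1.1 : ℕ) * w.2 ^ (e.1.2 : ℕ))) * F w := by
          show (eval ![w.1, w.2]) q * F w = _
          rw [eval_eq_sum_idx hq w]
      _ = ∑ e : Idx n, coeffVec n q e
            * (w.1 ^ (e.1.1 : ℕ) * w.2 ^ (e.1.2 : ℕ) * F w) := by
          rw [Finset.sum_mul]
          exact Finset.sum_congr rfl fun e _ => by ring
  have hintterm : ∀ e : Idx n,
      Integrable (fun w : ℝ × ℝ => w.1 ^ (e.1.1 : ℕ) * w.2 ^ (e.1.2 : ℕ) * F w) μ := by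
    intro e
    have he : (e.1.1 : ℕ) + (e.1.2 : ℕ) ≤ n := e.2
    exact integrable_key hμ (by omega)
  have hzero : ∫ w : ℝ × ℝ, F w * F w ∂μ = 0 := by
    have h1 : ∫ w : ℝ × ℝ, F w * F w ∂μ
        = ∑ e : Idx n, coeffVec n q e
            * ∫ w : ℝ × ℝ, w.1 ^ (e.1.1 : ℕ) * w.2 ^ (e.1.2 : ℕ) * F w ∂μ := by
      simp only [hsq]
      rw [integral_finset_sum _ (fun e _ => (hintterm e).const_mul _)]
      exact Finset.sum_congr rfl fun e _ => integral_const_mul _ _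
    rw [h1]
    refine Finset.sum_eq_zero fun e _ => ?_
    rw [← mulVec_eq hμ hq e, hker]
    simp
  -- integrability of the square
  have hint2 : Integrable (fun w : ℝ × ℝ => F w * F w) μ := by
    have hd : (q * q).totalDegree ≤ 2 * n := by
      have := totalDegree_mul q q
      omega
    have := integrable_key (q := q * q) (i := 0) (j := 0) hμ (by omega)
    refine this.congr ?_
    filter_upwards with w
    simp [hF]
  have hae : ∀ᵐ w ∂μ, F w * F w = 0 := by
    have hnn : 0 ≤ fun w : ℝ × ℝ => F w * F w := fun w => mul_self_nonneg _
    have := (integral_eq_zero_iff_of_nonneg hnn hint2).mp hzero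
    filter_upwards [this] with w hw
    exact hw
  have hN : μ {w : ℝ × ℝ | F w ≠ 0} = 0 := by
    have h1 : {w : ℝ × ℝ | F w ≠ 0} = {w : ℝ × ℝ | ¬ (F w * F w = 0)} := by
      ext w; simp [mul_self_eq_zero]
    rw [h1]
    exact hae
  have hopen : IsOpen {w : ℝ × ℝ | F w ≠ 0} := by
    have : {w : ℝ × ℝ | F w ≠ 0} = F ⁻¹' ({0}ᶜ) := rfl
    rw [this]
    exact (isClosed_singleton.preimage (continuous_evalp q)).isOpen_compl
  exact hz _ hopen hne hN

end WCaux

/-- a moment sequence with a representing measure is weakly consistent. -/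
theorem weakly_consistent_of_represents (n : ℕ) (β : ℕ → ℕ → ℝ) (μ : Measure (ℝ × ℝ))
    (hμ : Represents n β μ) (p : MvPolynomial (Fin 2) ℝ) (hp : p.totalDegree ≤ n)
    (hvan : ∀ z ∈ variety n β, eval ![z.1, z.2] p = 0) :
    (momentMatrix n β).mulVec (coeffVec n p) = 0 := by
  funext e
  show _ = (0 : Idx n → ℝ) e
  rw [Pi.zero_apply, WCaux.mulVec_eq hμ hp e]
  have hvs : ∀ z ∈ msupport μ, eval ![z.1, z.2] p = 0 :=
    fun z hz => hvan z (WCaux.msupport_subset hμ hz)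
  have hae : (fun z : ℝ × ℝ => z.1 ^ (e.1.1 : ℕ) * z.2 ^ (e.1.2 : ℕ) * eval ![z.1, z.2] p)
      =ᵐ[μ] 0 := by
    rw [Filter.EventuallyEq, ae_iff]
    refine measure_mono_null ?_ (WCaux.compl_msupport_null μ)
    intro z hz hmem
    exact hz (by rw [Pi.zero_apply, hvs z hmem, mul_zero])
  rw [integral_eq_zero_of_ae hae]
end

section
/- If β^{(2n)} admits a representing measure, then β is consistent: for every polynomial p of degree ≤ 2n vanishing identically on the algebraic variety V(M(n)), the Riesz functional satisfies Λ_β(p) = 0. -/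
open MeasureTheory MvPolynomial

/- ------------------- auxiliary lemmas ------------------- -/

lemma deg_le_of_mem_support (p : MvPolynomial (Fin 2) ℝ) {d : Fin 2 →₀ ℕ}
    (hd : d ∈ p.support) : (d 0 : ℕ) + d 1 ≤ p.totalDegree := by
  have h := MvPolynomial.le_totalDegree hd
  rwa [Finsupp.sum_fintype _ _ (fun _ => rfl), Fin.sum_univ_two] at h

lemma eval_eq_sum_support (p : MvPolynomial (Fin 2) ℝ) (z : ℝ × ℝ) :
    eval ![z.1, z.2] p = ∑ d ∈ p.support, p.coeff d * (z.1 ^ (d 0) * z.2 ^ (d 1)) := by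
  rw [eval_eq']
  refine Finset.sum_congr rfl fun d _ => ?_
  rw [Fin.prod_univ_two]; simp

lemma integrable_eval {n : ℕ} {β : ℕ → ℕ → ℝ} {μ : Measure (ℝ × ℝ)}
    (hμ : Represents n β μ) (r : MvPolynomial (Fin 2) ℝ) (hr : r.totalDegree ≤ 2 * n) :
    Integrable (fun z : ℝ × ℝ => eval ![z.1, z.2] r) μ := by
  have h : (fun z : ℝ × ℝ => eval ![z.1, z.2] r)
      = fun z => ∑ d ∈ r.support, r.coeff d * (z.1 ^ (d 0) * z.2 ^ (d 1)) := by
    funext z; exact eval_eq_sum_support r z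
  rw [h]
  refine integrable_finset_sum _ fun d hd => ?_
  exact ((hμ (d 0) (d 1) ((deg_le_of_mem_support r hd).trans hr)).1).const_mul _

lemma integral_eval {n : ℕ} {β : ℕ → ℕ → ℝ} {μ : Measure (ℝ × ℝ)}
    (hμ : Represents n β μ) (r : MvPolynomial (Fin 2) ℝ) (hr : r.totalDegree ≤ 2 * n) :
    ∫ z, eval ![z.1, z.2] r ∂μ = riesz β r := by
  have h1 : ∫ z, eval ![z.1, z.2] r ∂μ
      = ∫ z, ∑ d ∈ r.support, r.coeff d * (z.1 ^ (d 0) * z.2 ^ (d 1)) ∂μ := by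
    congr 1; funext z; exact eval_eq_sum_support r z
  rw [h1, integral_finset_sum _ (fun d hd =>
    ((hμ (d 0) (d 1) ((deg_le_of_mem_support r hd).trans hr)).1).const_mul _), riesz]
  refine Finset.sum_congr rfl fun d hd => ?_
  rw [integral_const_mul, ← (hμ (d 0) (d 1) ((deg_le_of_mem_support r hd).trans hr)).2]

lemma single_add_apply (i j : ℕ) :
    (Finsupp.single (0 : Fin 2) i + Finsupp.single (1 : Fin 2) j) 0 = i ∧
    (Finsupp.single (0 : Fin 2) i + Finsupp.single (1 : Fin 2) j) 1 = j := by
  constructor <;> simp [Finsupp.single_apply]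

lemma eval_eq_sum_idx (n : ℕ) (q : MvPolynomial (Fin 2) ℝ) (hq : q.totalDegree ≤ n)
    (z : ℝ × ℝ) :
    eval ![z.1, z.2] q
      = ∑ idx : Idx n, coeffVec n q idx * (z.1 ^ (idx.1.1 : ℕ) * z.2 ^ (idx.1.2 : ℕ)) := by
  rw [eval_eq_sum_support]
  symm
  rw [← Finset.sum_filter_of_ne (p := fun idx : Idx n =>
      (Finsupp.single (0 : Fin 2) (idx.1.1 : ℕ) + Finsupp.single 1 (idx.1.2 : ℕ)) ∈ q.support)
      (fun idx _ h => by
        by_contra hmem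
        exact h (by rw [coeffVec, MvPolynomial.notMem_support_iff.mp hmem, zero_mul]))]
  refine Finset.sum_bij'
    (i := fun idx _ => Finsupp.single (0 : Fin 2) (idx.1.1 : ℕ) + Finsupp.single 1 (idx.1.2 : ℕ))
    (j := fun d hd => ⟨(⟨d 0, by
        have := (deg_le_of_mem_support q hd).trans hq; omega⟩,
      ⟨d 1, by have := (deg_le_of_mem_support q hd).trans hq; omega⟩), by
        simpa using (deg_le_of_mem_support q hd).trans hq⟩)
    (fun idx hidx => (Finset.mem_filter.mp hidx).2)
    (fun d hd => by
      refine Finset.mem_filter.mpr ⟨Finset.mem_univ _, ?_⟩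
      convert hd using 2
      ext a
      fin_cases a <;> simp [Finsupp.single_apply])
    (fun idx hidx => by
      ext
      · simp [Finsupp.single_apply]
      · simp [Finsupp.single_apply])
    (fun d hd => by
      ext a
      fin_cases a <;> simp [Finsupp.single_apply])
    (fun idx hidx => by
      simp only [coeffVec, (single_add_apply ((idx.1.1 : Fin _) : ℕ) ((idx.1.2 : Fin _) : ℕ)).1,
        (single_add_apply ((idx.1.1 : Fin _) : ℕ) ((idx.1.2 : Fin _) : ℕ)).2])

lemma sq_integral_zero {n : ℕ} {β : ℕ → ℕ → ℝ} {μ : Measure (ℝ × ℝ)}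
    (hμ : Represents n β μ)
    (a : Idx n → ℝ) (hker : (momentMatrix n β).mulVec a = 0)
    (g : ℝ × ℝ → ℝ)
    (hg : g = fun w => ∑ idx : Idx n, a idx * (w.1 ^ (idx.1.1 : ℕ) * w.2 ^ (idx.1.2 : ℕ))) :
    ∫ w, g w * g w ∂μ = 0 ∧ Integrable (fun w => g w * g w) μ := by
  have hle : ∀ pi qi : Idx n,
      ((pi.1.1 : ℕ) + (qi.1.1 : ℕ)) + ((pi.1.2 : ℕ) + (qi.1.2 : ℕ)) ≤ 2 * n := by
    intro pi qi
    have h1 := pi.2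
    have h2 := qi.2
    omega
  have hint : ∀ pi qi : Idx n, Integrable
      (fun w : ℝ × ℝ => (a pi * a qi) *
        (w.1 ^ ((pi.1.1 : ℕ) + (qi.1.1 : ℕ)) * w.2 ^ ((pi.1.2 : ℕ) + (qi.1.2 : ℕ)))) μ :=
    fun pi qi => ((hμ _ _ (hle pi qi)).1).const_mul _
  have hgg : ∀ w : ℝ × ℝ, g w * g w = ∑ pi : Idx n, ∑ qi : Idx n,
      (a pi * a qi) *
        (w.1 ^ ((pi.1.1 : ℕ) + (qi.1.1 : ℕ)) * w.2 ^ ((pi.1.2 : ℕ) + (qi.1.2 : ℕ))) := by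
    intro w
    rw [hg, Finset.sum_mul_sum]
    refine Finset.sum_congr rfl fun pi _ => Finset.sum_congr rfl fun qi _ => ?_
    rw [pow_add, pow_add]; ring
  have hinteg : Integrable (fun w => g w * g w) μ := by
    have h : Integrable (fun w : ℝ × ℝ => ∑ pi : Idx n, ∑ qi : Idx n,
        (a pi * a qi) *
          (w.1 ^ ((pi.1.1 : ℕ) + (qi.1.1 : ℕ)) * w.2 ^ ((pi.1.2 : ℕ) + (qi.1.2 : ℕ)))) μ :=
      integrable_finset_sum _ fun pi _ => integrable_finset_sum _ fun qi _ => hint pi qi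
    exact h.congr (Filter.Eventually.of_forall fun w => (hgg w).symm)
  constructor
  · have h1 : ∫ w, g w * g w ∂μ = ∑ pi : Idx n, ∑ qi : Idx n,
        (a pi * a qi) * β ((pi.1.1 : ℕ) + (qi.1.1 : ℕ)) ((pi.1.2 : ℕ) + (qi.1.2 : ℕ)) := by
      rw [integral_congr_ae (Filter.Eventually.of_forall hgg),
        integral_finset_sum _ (fun pi _ => integrable_finset_sum _ fun qi _ => hint pi qi)]
      refine Finset.sum_congr rfl fun pi _ => ?_
      rw [integral_finset_sum _ (fun qi _ => hint pi qi)]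
      refine Finset.sum_congr rfl fun qi _ => ?_
      rw [integral_const_mul, ← (hμ _ _ (hle pi qi)).2]
    rw [h1]
    have h2 : ∀ pi : Idx n, ((momentMatrix n β).mulVec a) pi = 0 := fun pi => congrFun hker pi
    calc ∑ pi : Idx n, ∑ qi : Idx n,
        (a pi * a qi) * β ((pi.1.1 : ℕ) + (qi.1.1 : ℕ)) ((pi.1.2 : ℕ) + (qi.1.2 : ℕ))
        = ∑ pi : Idx n, a pi * ((momentMatrix n β).mulVec a) pi := by
          refine Finset.sum_congr rfl fun pi _ => ?_
          rw [Matrix.mulVec, dotProduct, Finset.mul_sum]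
          refine Finset.sum_congr rfl fun qi _ => ?_
          rw [momentMatrix]; ring
      _ = 0 := by simp [h2]
  · exact hinteg

lemma msupport_subset_variety (n : ℕ) (β : ℕ → ℕ → ℝ) (μ : Measure (ℝ × ℝ))
    (hμ : Represents n β μ) : msupport μ ⊆ variety n β := by
  intro z hz q hq hker
  set a : Idx n → ℝ := coeffVec n q with ha
  set g : ℝ × ℝ → ℝ :=
    fun w => ∑ idx : Idx n, a idx * (w.1 ^ (idx.1.1 : ℕ) * w.2 ^ (idx.1.2 : ℕ)) with hgdef
  obtain ⟨hzero, hinteg⟩ := sq_integral_zero hμ a hker g hgdef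
  have hcont : Continuous g := by
    rw [hgdef]
    exact continuous_finset_sum _ fun idx _ =>
      continuous_const.mul ((continuous_fst.pow _).mul (continuous_snd.pow _))
  have hae : (fun w => g w * g w) =ᵐ[μ] 0 := by
    refine (integral_eq_zero_iff_of_nonneg_ae ?_ hinteg).mp hzero
    exact Filter.Eventually.of_forall fun w => mul_self_nonneg (g w)
  have hnull : μ {w : ℝ × ℝ | g w ≠ 0} = 0 := by
    have h := ae_iff.mp hae
    simp only [Pi.zero_apply, mul_self_eq_zero] at h
    exact h
  have hgz : g z = 0 := by
    by_contra hne
    refine hz {w : ℝ × ℝ | g w ≠ 0} ?_ hne (by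
      exact hnull)
    exact isOpen_compl_singleton.preimage hcont
  rw [eval_eq_sum_idx n q hq z]
  exact hgz

lemma msupport_compl_null (μ : Measure (ℝ × ℝ)) : μ (msupport μ)ᶜ = 0 := by
  refine measure_null_of_locally_null _ fun x hx => ?_
  have hx' : ¬ ∀ U : Set (ℝ × ℝ), IsOpen U → x ∈ U → μ U ≠ 0 := hx
  push_neg at hx'
  obtain ⟨U, hUo, hxU, hU0⟩ := hx'
  exact ⟨U, mem_nhdsWithin_of_mem_nhds (hUo.mem_nhds hxU), hU0⟩

/-- a moment sequence with a representing measure is consistent. -/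
theorem consistent_of_represents (n : ℕ) (β : ℕ → ℕ → ℝ) (μ : Measure (ℝ × ℝ))
    (hμ : Represents n β μ) (p : MvPolynomial (Fin 2) ℝ) (hp : p.totalDegree ≤ 2 * n)
    (hvan : ∀ z ∈ variety n β, eval ![z.1, z.2] p = 0) :
    riesz β p = 0 := by
  have hsub := msupport_subset_variety n β μ hμ
  have hae : (fun z : ℝ × ℝ => eval ![z.1, z.2] p) =ᵐ[μ] 0 := by
    refine ae_iff.mpr (measure_mono_null ?_ (msupport_compl_null μ))
    intro z hz
    simp only [Set.mem_setOf_eq, Pi.zero_apply] at hz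
    intro hmem
    exact hz (hvan z (hsub hmem))
  rw [← integral_eval hμ p hp, integral_congr_ae hae]
  simp
end

section
/- Let β^{(2n)} be an extremal moment sequence, i.e., r := rank M(n) equals v := card V(M(n)) < ∞, and write V = {(x_1,y_1),…,(x_v,y_v)}. Let B be a set of r monomials of degree ≤ n whose corresponding columns form a basis of the column space of M(n), and let W_B be the v × r matrix with entries (the monomials in B evaluated at the points of V). Then β is weakly consistent if and only if W_B is invertible. -/
open MeasureTheory MvPolynomial

namespace CF8

variable {n : ℕ}

noncomputable def φ (q : Idx n) : Fin 2 →₀ ℕ :=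
  Finsupp.single 0 (q.1.1 : ℕ) + Finsupp.single 1 (q.1.2 : ℕ)

lemma φ_zero (q : Idx n) : φ q 0 = (q.1.1 : ℕ) := by
  simp [φ, Finsupp.single_apply]

lemma φ_one (q : Idx n) : φ q 1 = (q.1.2 : ℕ) := by
  simp [φ, Finsupp.single_apply]

lemma φ_inj : Function.Injective (φ (n := n)) := by
  intro q q' h
  have h0 : (q.1.1 : ℕ) = (q'.1.1 : ℕ) := by rw [← φ_zero q, ← φ_zero q', h]
  have h1 : (q.1.2 : ℕ) = (q'.1.2 : ℕ) := by rw [← φ_one q, ← φ_one q', h]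
  exact Subtype.ext (Prod.ext (Fin.ext h0) (Fin.ext h1))

lemma coeffVec_eq (p : MvPolynomial (Fin 2) ℝ) (q : Idx n) :
    coeffVec n p q = p.coeff (φ q) := rfl

lemma support_subset (p : MvPolynomial (Fin 2) ℝ) (hp : p.totalDegree ≤ n) :
    p.support ⊆ Finset.univ.image (φ (n := n)) := by
  intro d hd
  have hle : d 0 + d 1 ≤ n := by
    have h1 := MvPolynomial.le_totalDegree hd
    have hsum : (d.sum fun _ e => e) = d 0 + d 1 := by
      rw [Finsupp.sum_fintype _ _ (fun _ => rfl), Fin.sum_univ_two]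
    rw [hsum] at h1
    exact le_trans h1 hp
  have hd0 : d 0 < n + 1 := by omega
  have hd1 : d 1 < n + 1 := by omega
  refine Finset.mem_image.mpr ⟨⟨(⟨d 0, hd0⟩, ⟨d 1, hd1⟩), hle⟩, Finset.mem_univ _, ?_⟩
  ext i
  fin_cases i
  · simp [φ, Finsupp.single_apply]
  · simp [φ, Finsupp.single_apply]

lemma eval_eq_sum (p : MvPolynomial (Fin 2) ℝ) (hp : p.totalDegree ≤ n) (z : ℝ × ℝ) :
    eval ![z.1, z.2] p
      = ∑ q : Idx n, coeffVec n p q * ((z.1 ^ (q.1.1 : ℕ)) * (z.2 ^ (q.1.2 : ℕ))) := by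
  have e1 : eval ![z.1, z.2] p = ∑ d ∈ p.support, p.coeff d * (z.1 ^ d 0 * z.2 ^ d 1) := by
    rw [MvPolynomial.eval_eq' ![z.1, z.2] p]
    refine Finset.sum_congr rfl fun d _ => ?_
    rw [Fin.prod_univ_two]
    simp
  have e2 : ∑ d ∈ p.support, p.coeff d * (z.1 ^ d 0 * z.2 ^ d 1)
      = ∑ d ∈ Finset.univ.image (φ (n := n)), p.coeff d * (z.1 ^ d 0 * z.2 ^ d 1) := by
    refine Finset.sum_subset (support_subset p hp) fun d _ hds => ?_
    simp [MvPolynomial.notMem_support_iff.mp hds]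
  have e3 : ∑ d ∈ Finset.univ.image (φ (n := n)), p.coeff d * (z.1 ^ d 0 * z.2 ^ d 1)
      = ∑ q : Idx n, p.coeff (φ q) * (z.1 ^ (φ q 0) * z.2 ^ (φ q 1)) := by
    refine Finset.sum_image ?_
    intro a _ b _ h
    exact φ_inj h
  rw [e1, e2, e3]
  refine Finset.sum_congr rfl fun q _ => ?_
  rw [φ_zero, φ_one, coeffVec_eq]

noncomputable def P (n : ℕ) (u : Idx n → ℝ) : MvPolynomial (Fin 2) ℝ :=
  ∑ q : Idx n, monomial (φ q) (u q)

lemma totalDegree_P (u : Idx n → ℝ) : (P n u).totalDegree ≤ n := by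
  refine le_trans (MvPolynomial.totalDegree_finset_sum _ _) (Finset.sup_le fun q _ => ?_)
  by_cases h : u q = 0
  · simp [h]
  · rw [MvPolynomial.totalDegree_monomial _ h]
    have h2 : ((φ q).sum fun _ e => e) = (q.1.1 : ℕ) + (q.1.2 : ℕ) := by
      rw [Finsupp.sum_fintype _ _ (fun _ => rfl), Fin.sum_univ_two, φ_zero, φ_one]
    rw [h2]
    exact q.2

lemma coeffVec_P (u : Idx n → ℝ) : coeffVec n (P n u) = u := by
  classical
  funext q
  rw [coeffVec_eq, P, MvPolynomial.coeff_sum]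
  rw [Finset.sum_eq_single q]
  · simp [MvPolynomial.coeff_monomial]
  · intro q' _ hne
    rw [MvPolynomial.coeff_monomial, if_neg (fun h => hne (φ_inj h))]
  · simp

end CF8

open CF8 in
/-- for an extremal moment sequence, weak consistency is equivalent to
invertibility of the compressed Vandermonde matrix `W_B`. -/
theorem weakly_consistent_iff_vandermonde_invertible (n : ℕ) (β : ℕ → ℕ → ℝ)
    (v : ℕ) (e : Fin v → ℝ × ℝ) (he : Function.Injective e)
    (hrange : Set.range e = variety n β)
    (hrv : (momentMatrix n β).rank = v)
    (B : Fin v → Idx n)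
    (hBli : LinearIndependent ℝ (fun m : Fin v => fun i : Idx n => momentMatrix n β i (B m)))
    (hBspan : Submodule.span ℝ (Set.range (fun m : Fin v => fun i : Idx n => momentMatrix n β i (B m)))
      = Submodule.span ℝ (Set.range (momentMatrix n β).transpose)) :
    (∀ p : MvPolynomial (Fin 2) ℝ, p.totalDegree ≤ n →
        (∀ z ∈ variety n β, eval ![z.1, z.2] p = 0) →
        (momentMatrix n β).mulVec (coeffVec n p) = 0)
      ↔ IsUnit (Matrix.of (fun k m : Fin v =>
          (e k).1 ^ ((B m).1.1 : ℕ) * (e k).2 ^ ((B m).1.2 : ℕ))).det := by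
  classical
  set M := momentMatrix n β with hM
  set W : Matrix (Fin v) (Fin v) ℝ := Matrix.of (fun k m : Fin v =>
      (e k).1 ^ ((B m).1.1 : ℕ) * (e k).2 ^ ((B m).1.2 : ℕ)) with hW
  set E : Matrix (Fin v) (Idx n) ℝ := Matrix.of (fun k (q : Idx n) =>
      (e k).1 ^ ((q.1.1 : ℕ)) * (e k).2 ^ ((q.1.2 : ℕ))) with hE
  -- evaluation of any degree-≤n polynomial at the points of the variety
  have hEvalp : ∀ (p : MvPolynomial (Fin 2) ℝ), p.totalDegree ≤ n → ∀ k : Fin v,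
      E.mulVec (coeffVec n p) k = eval ![(e k).1, (e k).2] p := by
    intro p hp k
    rw [eval_eq_sum p hp]
    simp only [Matrix.mulVec, dotProduct, hE, Matrix.of_apply]
    exact Finset.sum_congr rfl fun q _ => by ring
  -- membership of points in the variety
  have hmem : ∀ k : Fin v, e k ∈ variety n β := fun k => hrange ▸ ⟨k, rfl⟩
  -- kernel inclusion: ker M ⊆ ker E
  have hker : ∀ u : Idx n → ℝ, M.mulVec u = 0 → E.mulVec u = 0 := by
    intro u hu
    funext k
    have h0 := hmem k (P n u) (totalDegree_P u) (by rw [coeffVec_P]; exact hu)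
    have h1 := hEvalp (P n u) (totalDegree_P u) k
    rw [coeffVec_P] at h1
    rw [Pi.zero_apply, h1, h0]
  -- extension of a coefficient vector on B by zero
  set uc : (Fin v → ℝ) → (Idx n → ℝ) :=
    fun c q => ∑ m, if B m = q then c m else 0 with huc
  have hucE : ∀ c : Fin v → ℝ, E.mulVec (uc c) = W.mulVec c := by
    intro c
    funext k
    simp only [Matrix.mulVec, dotProduct, huc]
    calc ∑ q : Idx n, E k q * ∑ m, ite (B m = q) (c m) 0
        = ∑ q : Idx n, ∑ m, ite (B m = q) (E k q * c m) 0 := by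
          refine Finset.sum_congr rfl fun q _ => ?_
          rw [Finset.mul_sum]
          exact Finset.sum_congr rfl fun m _ => by rw [mul_ite, mul_zero]
      _ = ∑ m, ∑ q : Idx n, ite (B m = q) (E k q * c m) 0 := Finset.sum_comm
      _ = ∑ m, E k (B m) * c m := by
          refine Finset.sum_congr rfl fun m _ => ?_
          rw [Finset.sum_ite_eq]
          simp
      _ = ∑ m, W k m * c m := rfl
  have hucM : ∀ c : Fin v → ℝ, M.mulVec (uc c) = fun i => ∑ m, M i (B m) * c m := by
    intro c
    funext i
    simp only [Matrix.mulVec, dotProduct, huc]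
    calc ∑ q : Idx n, M i q * ∑ m, ite (B m = q) (c m) 0
        = ∑ q : Idx n, ∑ m, ite (B m = q) (M i q * c m) 0 := by
          refine Finset.sum_congr rfl fun q _ => ?_
          rw [Finset.mul_sum]
          exact Finset.sum_congr rfl fun m _ => by rw [mul_ite, mul_zero]
      _ = ∑ m, ∑ q : Idx n, ite (B m = q) (M i q * c m) 0 := Finset.sum_comm
      _ = ∑ m, M i (B m) * c m := by
          refine Finset.sum_congr rfl fun m _ => ?_
          rw [Finset.sum_ite_eq]
          simp
  constructor
  · -- weak consistency → W invertible
    intro hwc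
    rw [isUnit_iff_ne_zero]
    intro hdet
    obtain ⟨c, hc0, hWc⟩ := Matrix.exists_mulVec_eq_zero_iff.mpr hdet
    -- the polynomial P (uc c) vanishes on the variety
    have hvan : ∀ z ∈ variety n β, eval ![z.1, z.2] (P n (uc c)) = 0 := by
      intro z hz
      obtain ⟨k, rfl⟩ : ∃ k, e k = z := by
        rw [← hrange] at hz; exact hz
      have h1 := hEvalp (P n (uc c)) (totalDegree_P _) k
      rw [coeffVec_P, hucE, hWc] at h1
      rw [← h1, Pi.zero_apply]
    have hMu := hwc (P n (uc c)) (totalDegree_P _) hvan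
    rw [coeffVec_P, hucM] at hMu
    -- contradicts linear independence of the B-columns
    have hsum : ∑ m, c m • (fun i : Idx n => M i (B m)) = 0 := by
      funext i
      simp only [Finset.sum_apply, Pi.smul_apply, smul_eq_mul, Pi.zero_apply]
      have := congrFun hMu i
      simp only [Pi.zero_apply] at this
      rw [← this]
      exact Finset.sum_congr rfl fun m _ => mul_comm _ _
    have := Fintype.linearIndependent_iff.mp hBli c hsum
    exact hc0 (funext this)
  · -- W invertible → weak consistency
    intro hdet p hp hvan
    have hWu : IsUnit W := (Matrix.isUnit_iff_isUnit_det W).mpr hdet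
    -- E.mulVecLin is surjective
    have hsurj : Function.Surjective E.mulVecLin := by
      intro y
      refine ⟨uc (W⁻¹.mulVec y), ?_⟩
      rw [Matrix.mulVecLin_apply, hucE, Matrix.mulVec_mulVec, Matrix.mul_nonsing_inv _ hdet,
        Matrix.one_mulVec]
    -- finrank computations
    have hrn1 := LinearMap.finrank_range_add_finrank_ker (Matrix.mulVecLin M)
    have hrn2 := LinearMap.finrank_range_add_finrank_ker (Matrix.mulVecLin E)
    have hrE : Module.finrank ℝ (LinearMap.range E.mulVecLin) = v := by
      rw [LinearMap.range_eq_top.mpr hsurj, finrank_top]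
      simp
    have hrM : Module.finrank ℝ (LinearMap.range M.mulVecLin) = v := hrv
    have hkk : Module.finrank ℝ (LinearMap.ker M.mulVecLin)
        = Module.finrank ℝ (LinearMap.ker E.mulVecLin) := by omega
    have hle : LinearMap.ker M.mulVecLin ≤ LinearMap.ker E.mulVecLin := by
      intro u hu
      rw [LinearMap.mem_ker] at hu ⊢
      rw [Matrix.mulVecLin_apply] at hu ⊢
      exact hker u hu
    have heq := Submodule.eq_of_le_of_finrank_eq hle hkk
    -- conclude
    have hEu : E.mulVec (coeffVec n p) = 0 := by
      funext k
      rw [hEvalp p hp k, Pi.zero_apply]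
      exact hvan (e k) (hmem k)
    have : coeffVec n p ∈ LinearMap.ker M.mulVecLin := by
      rw [heq, LinearMap.mem_ker, Matrix.mulVecLin_apply]
      exact hEu
    rw [LinearMap.mem_ker, Matrix.mulVecLin_apply] at this
    exact this
end

section
/- Let M(3) be a 10×10 bivariate real moment matrix (of a sequence β^{(6)}) that is positive semidefinite with M(2) positive definite. If rank M(3) = 9, then the algebraic variety V(M(3)) is infinite; in particular, the case rank M(3) = card V(M(3)) = 9 is impossible. -/
open MeasureTheory MvPolynomial

/-! A kernel vector of `M(3)` is the coefficient vector of a polynomial `p` of degree at most 3.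
Since `M(2) > 0`, no nonzero kernel vector is supported on the monomials of degree at most 2, so
`p` has degree exactly 3; since the rank is 9, the kernel is the line spanned by `p`, so
`V(M(3))` contains the real zero set of `p`. A real bivariate polynomial of odd degree has
infinitely many zeros: if its top-degree part does not vanish at `g`, its restriction to each
line parallel to `g` is a univariate polynomial of odd degree, hence has a root. -/

namespace Polynomial

variable {R ι : Type*} [CommSemiring R]

theorem coeff_prod_sum_of_natDegree_le (s : Finset ι) (f : ι → R[X]) (n : ι → ℕ)
    (h : ∀ i ∈ s, (f i).natDegree ≤ n i) :
    (∏ i ∈ s, f i).coeff (∑ i ∈ s, n i) = ∏ i ∈ s, (f i).coeff (n i) := by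
  classical
  induction s using Finset.induction_on with
  | empty => simp
  | insert j s hj ih =>
    simp only [Finset.mem_insert, forall_eq_or_imp] at h
    rw [Finset.prod_insert hj, Finset.sum_insert hj, Finset.prod_insert hj,
      coeff_mul_add_eq_of_natDegree_le h.1 ((natDegree_prod_le _ _).trans (Finset.sum_le_sum h.2)),
      ih h.2]

theorem natDegree_linear_pow_le (a b : R) (k : ℕ) : ((C a * X + C b) ^ k).natDegree ≤ k :=
  (natDegree_pow_le_of_le k natDegree_linear_le).trans (mul_one k).le

theorem exists_isRoot_of_odd_natDegree {p : ℝ[X]} (hp : Odd p.natDegree) : ∃ x, p.IsRoot x := by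
  have hp0 : p ≠ 0 := by rintro rfl; simp at hp
  set q := p * p.comp (-X)
  -- `q x = p x * p (-x)` has leading coefficient `-(lc p)^2` since the degree is odd
  have hq_lc : q.leadingCoeff < 0 := by
    rw [leadingCoeff_mul, comp_neg_X_leadingCoeff_eq, hp.neg_one_pow]
    nlinarith [pow_pos (abs_pos.mpr (leadingCoeff_ne_zero.mpr hp0)) 2, sq_abs p.leadingCoeff]
  have hq_deg : 0 < q.degree := by
    rw [← natDegree_pos_iff_degree_pos, natDegree_mul hp0 (by simpa using hp0), natDegree_comp]
    simp only [natDegree_neg, natDegree_X, mul_one]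
    exact Nat.add_pos_left hp.pos _
  obtain ⟨x, hx⟩ := ((q.tendsto_atBot_of_leadingCoeff_nonpos hq_deg hq_lc.le).eventually
    (Filter.eventually_lt_atBot 0)).exists
  simp only [q, eval_mul, eval_comp, eval_neg, eval_X] at hx
  have hcont : Continuous fun x => p.eval x := p.continuous
  rcases mul_neg_iff.mp hx with h | h
  · obtain ⟨y, hy⟩ := intermediate_value_univ (-x) x hcont ⟨h.2.le, h.1.le⟩
    exact ⟨y, hy⟩
  · obtain ⟨y, hy⟩ := intermediate_value_univ x (-x) hcont ⟨h.1.le, h.2.le⟩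
    exact ⟨y, hy⟩

end Polynomial

namespace MvPolynomial

variable {σ R : Type*} [CommSemiring R]

noncomputable def restrictLine (a g : σ → R) : MvPolynomial σ R →ₐ[R] Polynomial R :=
  aeval fun i => Polynomial.C (g i) * Polynomial.X + Polynomial.C (a i)

variable (a g : σ → R)

theorem eval_restrictLine (p : MvPolynomial σ R) (t : R) :
    (restrictLine a g p).eval t = eval (fun i => g i * t + a i) p := by
  rw [restrictLine, ← Polynomial.coe_aeval_eq_eval, ← AlgHom.comp_apply, comp_aeval]
  simp

theorem restrictLine_monomial (d : σ →₀ ℕ) (c : R) :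
    restrictLine a g (monomial d c) =
      Polynomial.C c *
        ∏ i ∈ d.support, (Polynomial.C (g i) * Polynomial.X + Polynomial.C (a i)) ^ d i := by
  rw [restrictLine, aeval_monomial]
  rfl

theorem natDegree_restrictLine_monomial_le (d : σ →₀ ℕ) (c : R) :
    (restrictLine a g (monomial d c)).natDegree ≤ d.degree := by
  rw [restrictLine_monomial]
  refine (Polynomial.natDegree_C_mul_le _ _).trans ((Polynomial.natDegree_prod_le _ _).trans ?_)
  exact Finset.sum_le_sum fun i _ => Polynomial.natDegree_linear_pow_le _ _ _

theorem coeff_restrictLine_monomial_degree (d : σ →₀ ℕ) (c : R) :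
    (restrictLine a g (monomial d c)).coeff d.degree = eval g (monomial d c) := by
  rw [restrictLine_monomial, Polynomial.coeff_C_mul, eval_monomial, Finsupp.degree_apply,
    Polynomial.coeff_prod_sum_of_natDegree_le]
  · congr 1
    refine Finset.prod_congr rfl fun i _ => ?_
    simpa using Polynomial.coeff_pow_of_natDegree_le
      (p := Polynomial.C (g i) * Polynomial.X + Polynomial.C (a i)) (m := d i)
      Polynomial.natDegree_linear_le
  · exact fun i _ => Polynomial.natDegree_linear_pow_le _ _ _

theorem natDegree_restrictLine_le (p : MvPolynomial σ R) :
    (restrictLine a g p).natDegree ≤ p.totalDegree := by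
  conv_lhs => rw [p.as_sum, map_sum]
  exact Polynomial.natDegree_sum_le_of_forall_le _ _ fun d hd =>
    (natDegree_restrictLine_monomial_le a g d _).trans (le_totalDegree hd)

theorem coeff_restrictLine_of_totalDegree_le {p : MvPolynomial σ R} {n : ℕ}
    (hn : p.totalDegree ≤ n) :
    (restrictLine a g p).coeff n = eval g (homogeneousComponent n p) := by
  conv_lhs => rw [p.as_sum, map_sum]
  rw [Polynomial.finsetSum_coeff, homogeneousComponent_apply, map_sum, Finset.sum_filter]
  refine Finset.sum_congr rfl fun d hd => ?_
  split_ifs with hdn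
  · rw [← hdn, coeff_restrictLine_monomial_degree]
  · refine Polynomial.coeff_eq_zero_of_natDegree_lt
      ((natDegree_restrictLine_monomial_le a g d _).trans_lt ?_)
    exact lt_of_le_of_ne ((le_totalDegree hd).trans hn) hdn

theorem homogeneousComponent_totalDegree_ne_zero {p : MvPolynomial σ R} (hp : p ≠ 0) :
    homogeneousComponent p.totalDegree p ≠ 0 := by
  obtain ⟨d, hd, hdeg⟩ :=
    Finset.exists_mem_eq_sup p.support (support_nonempty.mpr hp) fun s => s.sum fun _ e => e
  have hd_deg : d.degree = p.totalDegree := hdeg.symm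
  intro h
  have := congrArg (coeff d) h
  rw [coeff_homogeneousComponent, if_pos hd_deg, coeff_zero] at this
  exact mem_support_iff.mp hd this

theorem exists_eval_line_eq_zero_of_odd_totalDegree {p : MvPolynomial σ ℝ}
    (hp : Odd p.totalDegree) {g : σ → ℝ}
    (hg : eval g (homogeneousComponent p.totalDegree p) ≠ 0) (a : σ → ℝ) :
    ∃ t, eval (fun i => g i * t + a i) p = 0 := by
  have hdeg : (restrictLine a g p).natDegree = p.totalDegree := by
    refine (natDegree_restrictLine_le a g p).antisymm (Polynomial.le_natDegree_of_ne_zero ?_)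
    rwa [coeff_restrictLine_of_totalDegree_le a g le_rfl]
  obtain ⟨t, ht⟩ := Polynomial.exists_isRoot_of_odd_natDegree (hdeg ▸ hp)
  exact ⟨t, by rwa [Polynomial.IsRoot, eval_restrictLine] at ht⟩

end MvPolynomial

open MvPolynomial in
theorem infinite_zeroSet_of_odd_totalDegree {p : MvPolynomial (Fin 2) ℝ}
    (hp : Odd p.totalDegree) : {z : ℝ × ℝ | eval ![z.1, z.2] p = 0}.Infinite := by
  have hp0 : p ≠ 0 := by rintro rfl; simp at hp
  obtain ⟨g, hg⟩ : ∃ g, eval g (homogeneousComponent p.totalDegree p) ≠ 0 := by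
    by_contra! h
    exact homogeneousComponent_totalDegree_ne_zero hp0 (MvPolynomial.funext fun x => by simp [h])
  have hg_norm : 0 < g 0 ^ 2 + g 1 ^ 2 := by
    have hg0 : g 0 ≠ 0 ∨ g 1 ≠ 0 := by
      by_contra! h
      have hg_eq : g = 0 := funext fun i => by fin_cases i <;> simp [h]
      rw [hg_eq, eval_zero, constantCoeff_eq, coeff_homogeneousComponent, if_neg] at hg
      · exact hg rfl
      · simpa using hp.pos.ne
    rcases hg0 with h | h <;> positivity
  -- a root on each line `s • g⊥ + ℝ • g`
  choose t ht using fun s : ℝ =>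
    exists_eval_line_eq_zero_of_odd_totalDegree hp hg ![-(s * g 1), s * g 0]
  refine Set.infinite_of_injective_forall_mem
    (f := fun s => (g 0 * t s - s * g 1, g 1 * t s + s * g 0)) (fun s s' hss => ?_) (fun s => ?_)
  · obtain ⟨e₀, e₁⟩ := Prod.mk.inj hss
    have : (s - s') * (g 0 ^ 2 + g 1 ^ 2) = 0 := by linear_combination g 0 * e₁ - g 1 * e₀
    simpa [sub_eq_zero, hg_norm.ne'] using this
  · have hpt : ![g 0 * t s - s * g 1, g 1 * t s + s * g 0] =
        fun i => g i * t s + ![-(s * g 1), s * g 0] i := by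
      ext i
      fin_cases i <;> simp [sub_eq_add_neg]
    exact (congrArg (eval · p) hpt).trans (ht s)

open Matrix

namespace Matrix

variable {ι κ K : Type*} [Fintype ι] [Fintype κ]

theorem submatrix_mulVec_comp [NonUnitalNonAssocSemiring K] (M : Matrix ι ι K) {e : κ → ι}
    (he : Function.Injective e) {v : ι → K} (hv : ∀ i ∉ Set.range e, v i = 0) :
    M.submatrix e e *ᵥ (v ∘ e) = (M *ᵥ v) ∘ e := by
  funext k
  exact Fintype.sum_of_injective e he _ _ (fun i hi => by simp [hv i hi]) fun _ => rfl

theorem exists_forall_mulVec_eq_zero_eq_smul [Field K] [DecidableEq ι] (M : Matrix ι ι K)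
    (hM : M.rank + 1 = Fintype.card ι) :
    ∃ v ≠ 0, M *ᵥ v = 0 ∧ ∀ w, M *ᵥ w = 0 → ∃ c : K, w = c • v := by
  have hker : Module.finrank K (LinearMap.ker M.mulVecLin) = 1 := by
    have := LinearMap.finrank_range_add_finrank_ker M.mulVecLin
    rw [Module.finrank_fintype_fun_eq_card, ← hM] at this
    change M.rank + _ = _ at this
    omega
  obtain ⟨⟨v, hv⟩, hv0, hspan⟩ := finrank_eq_one_iff'.mp hker
  refine ⟨v, fun h => hv0 (Subtype.ext h), hv, fun w hw => ?_⟩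
  obtain ⟨c, hc⟩ := hspan ⟨w, hw⟩
  exact ⟨c, (congrArg Subtype.val hc).symm⟩

end Matrix

def Idx.castSucc {n : ℕ} (q : Idx n) : Idx (n + 1) :=
  ⟨(q.1.1.castSucc, q.1.2.castSucc), by simpa using q.2.trans n.le_succ⟩

theorem Idx.castSucc_injective (n : ℕ) : Function.Injective (@Idx.castSucc n) := by
  intro q r h
  simp only [Idx.castSucc, Subtype.mk.injEq, Prod.mk.injEq, Fin.castSucc_inj] at h
  exact Subtype.ext (Prod.ext h.1 h.2)

theorem Idx.mem_range_castSucc {n : ℕ} {q : Idx (n + 1)} (hq : (q.1.1 : ℕ) + q.1.2 ≤ n) :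
    q ∈ Set.range Idx.castSucc :=
  ⟨⟨(⟨q.1.1, by omega⟩, ⟨q.1.2, by omega⟩), hq⟩, rfl⟩

theorem Finsupp.degree_single_zero_add_single_one (a b : ℕ) :
    (Finsupp.single (0 : Fin 2) a + Finsupp.single 1 b).degree = a + b := by
  simp

theorem coeffVec_zero (n : ℕ) : coeffVec n 0 = 0 := by
  funext q; simp [coeffVec]

theorem coeffVec_smul (n : ℕ) (c : ℝ) (p : MvPolynomial (Fin 2) ℝ) :
    coeffVec n (c • p) = c • coeffVec n p := by
  funext q; simp [coeffVec]

theorem eq_of_coeffVec_eq {n : ℕ} {p q : MvPolynomial (Fin 2) ℝ} (hp : p.totalDegree ≤ n)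
    (hq : q.totalDegree ≤ n) (h : coeffVec n p = coeffVec n q) : p = q := by
  ext d
  have hd : d = Finsupp.single 0 (d 0) + Finsupp.single 1 (d 1) := by
    ext i; fin_cases i <;> simp
  by_cases hdn : d.degree ≤ n
  · rw [hd, Finsupp.degree_single_zero_add_single_one] at hdn
    rw [hd]
    exact congrFun h ⟨(⟨d 0, by omega⟩, ⟨d 1, by omega⟩), hdn⟩
  · rw [coeff_eq_zero_of_totalDegree_lt (hp.trans_lt (not_le.mp hdn)),
      coeff_eq_zero_of_totalDegree_lt (hq.trans_lt (not_le.mp hdn))]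

theorem exists_coeffVec_eq (n : ℕ) (v : Idx n → ℝ) :
    ∃ p : MvPolynomial (Fin 2) ℝ, p.totalDegree ≤ n ∧ coeffVec n p = v := by
  set e : Idx n → Fin 2 →₀ ℕ :=
    fun q => Finsupp.single 0 (q.1.1 : ℕ) + Finsupp.single 1 (q.1.2 : ℕ)
  have he : Function.Injective e := fun q r h => by
    have h₀ := DFunLike.congr_fun h 0
    have h₁ := DFunLike.congr_fun h 1
    simp only [e, Finsupp.add_apply, Finsupp.single_apply] at h₀ h₁
    exact Subtype.ext (Prod.ext (Fin.ext (by simpa using h₀)) (Fin.ext (by simpa using h₁)))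
  refine ⟨∑ q, monomial (e q) (v q), ?_, ?_⟩
  · refine (totalDegree_finsetSum _ _).trans (Finset.sup_le fun q _ => ?_)
    refine (totalDegree_monomial_le _ _).trans ?_
    change (e q).degree ≤ n
    simpa [e] using q.2
  · funext q
    change coeff (e q) (∑ r, monomial (e r) (v r)) = v q
    rw [coeff_sum, Finset.sum_eq_single_of_mem q (Finset.mem_univ q) fun r _ hrq => ?_,
      coeff_monomial, if_pos rfl]
    rw [coeff_monomial, if_neg (he.ne hrq)]

theorem totalDegree_eq_succ_of_mulVec_coeffVec_eq_zero {n : ℕ} {β : ℕ → ℕ → ℝ}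
    (hpd : (momentMatrix n β).PosDef) {p : MvPolynomial (Fin 2) ℝ} (hp : p ≠ 0)
    (hdeg : p.totalDegree ≤ n + 1) (hker : momentMatrix (n + 1) β *ᵥ coeffVec (n + 1) p = 0) :
    p.totalDegree = n + 1 := by
  refine hdeg.antisymm (not_lt.mp fun hlt => hp ?_)
  have hle : p.totalDegree ≤ n := Nat.lt_succ_iff.mp hlt
  have hvanish : ∀ q ∉ Set.range Idx.castSucc, coeffVec (n + 1) p q = 0 := by
    intro q hq
    refine coeff_eq_zero_of_totalDegree_lt ?_
    change _ < Finsupp.degree _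
    rw [Finsupp.degree_single_zero_add_single_one]
    by_contra! h
    exact hq (Idx.mem_range_castSucc (by omega))
  have hker' : momentMatrix n β *ᵥ coeffVec n p = 0 := by
    -- `M(n)` and `coeffVec n p` are definitionally the restrictions of `M(n+1)` and
    -- `coeffVec (n+1) p` along `Idx.castSucc`
    have := (momentMatrix (n + 1) β).submatrix_mulVec_comp (Idx.castSucc_injective n) hvanish
    rw [hker] at this
    exact this
  have hzero : coeffVec n p = 0 := by
    by_contra h
    simpa [hker'] using hpd.dotProduct_mulVec_pos h
  exact eq_of_coeffVec_eq hle (by simp) (by rw [hzero, coeffVec_zero])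

theorem zeroSet_subset_variety {n : ℕ} {β : ℕ → ℕ → ℝ} {p : MvPolynomial (Fin 2) ℝ}
    (hker : ∀ q : MvPolynomial (Fin 2) ℝ, q.totalDegree ≤ n →
      momentMatrix n β *ᵥ coeffVec n q = 0 → ∃ c : ℝ, q = c • p) :
    {z : ℝ × ℝ | eval ![z.1, z.2] p = 0} ⊆ variety n β := by
  intro z hz q hq hqker
  obtain ⟨c, rfl⟩ := hker q hq hqker
  simp [hz.out]

theorem rank_nine_variety_infinite_general (β : ℕ → ℕ → ℝ)
    (hpd : (momentMatrix 2 β).PosDef)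
    (hrank : (momentMatrix 3 β).rank = 9) :
    (variety 3 β).Infinite ∧ (variety 3 β).encard ≠ 9 := by
  obtain ⟨v, hv0, hvker, hvspan⟩ :=
    (momentMatrix 3 β).exists_forall_mulVec_eq_zero_eq_smul (by rw [hrank]; rfl)
  obtain ⟨p, hpdeg, rfl⟩ := exists_coeffVec_eq 3 v
  have hp0 : p ≠ 0 := by rintro rfl; exact hv0 (coeffVec_zero 3)
  have hp3 : p.totalDegree = 3 :=
    totalDegree_eq_succ_of_mulVec_coeffVec_eq_zero hpd hp0 hpdeg hvker
  have hker : ∀ q : MvPolynomial (Fin 2) ℝ, q.totalDegree ≤ 3 →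
      momentMatrix 3 β *ᵥ coeffVec 3 q = 0 → ∃ c : ℝ, q = c • p := fun q hq hqker => by
    obtain ⟨c, hc⟩ := hvspan _ hqker
    exact ⟨c, eq_of_coeffVec_eq hq ((totalDegree_smul_le _ _).trans hpdeg)
      (by rw [coeffVec_smul, hc])⟩
  have hinf : (variety 3 β).Infinite :=
    (infinite_zeroSet_of_odd_totalDegree (by rw [hp3]; decide)).mono (zeroSet_subset_variety hker)
  exact ⟨hinf, by rw [hinf.encard_eq]; decide⟩

/-- if `M(3) ≥ 0`, `M(2) > 0`, and `rank M(3) = 9`, then the algebraic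
variety is infinite; in particular `rank M(3) = card V(M(3)) = 9` is impossible. -/
theorem rank_nine_variety_infinite (β : ℕ → ℕ → ℝ)
    (hpsd : (momentMatrix 3 β).PosSemidef) (hpd : (momentMatrix 2 β).PosDef)
    (hrank : (momentMatrix 3 β).rank = 9) :
    (variety 3 β).Infinite ∧ (variety 3 β).encard ≠ 9 :=
  rank_nine_variety_infinite_general β hpd hrank
end

section
/- Define β^{(6)} by the explicit rational moments β_{00}=14, β_{10}=7/2, β_{01}=−67/8, β_{20}=79/4, β_{11}=1055/16, β_{02}=18195/64, β_{30}=−67/8, β_{21}=−1935/32, β_{12}=−43115/128, β_{03}=−926695/512, β_{40}=1055/16, β_{31}=18195/64, β_{22}=336151/256, β_{13}=6407195/1024, β_{04}=124731423/4096. Let h(x,y) = x⁴ + 6x − (11/2)y − 14x² + (43/2)xy − (17/2)y² − x²y + (1/2)xy². Then the Riesz functional satisfies Λ_β(h) = β_{40} + 6β_{10} − (11/2)β_{01} − 14β_{20} + (43/2)β_{11} − (17/2)β_{02} − β_{21} + (1/2)β_{12} = −320081/256 ≠ 0. -/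
open MeasureTheory MvPolynomial

/-- The quartic `h(x,y) = x⁴ + 6x − (11/2)y − 14x² + (43/2)xy − (17/2)y² − x²y + (1/2)xy²`. -/
noncomputable def hpoly : MvPolynomial (Fin 2) ℝ :=
  X 0 ^ 4 + C 6 * X 0 - C (11/2) * X 1 - C 14 * X 0 ^ 2 + C (43/2) * X 0 * X 1
    - C (17/2) * X 1 ^ 2 - X 0 ^ 2 * X 1 + C (1/2) * X 0 * X 1 ^ 2

noncomputable def rieszLinearMap (β : ℕ → ℕ → ℝ) : MvPolynomial (Fin 2) ℝ →ₗ[ℝ] ℝ :=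
  (basisMonomials (Fin 2) ℝ).constr ℝ fun d => β (d 0) (d 1)

theorem rieszLinearMap_apply (β : ℕ → ℕ → ℝ) (p : MvPolynomial (Fin 2) ℝ) :
    rieszLinearMap β p = riesz β p := by
  simp only [rieszLinearMap, Module.Basis.constr_apply, riesz, Finsupp.sum, smul_eq_mul]
  rfl

theorem riesz_monomial (β : ℕ → ℕ → ℝ) (d : Fin 2 →₀ ℕ) (a : ℝ) :
    riesz β (monomial d a) = a * β (d 0) (d 1) := by
  have hbasis : rieszLinearMap β (monomial d 1) = β (d 0) (d 1) :=
    (basisMonomials (Fin 2) ℝ).constr_basis ℝ _ d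
  have hsmul : monomial d a = a • monomial d (1 : ℝ) := by
    rw [smul_monomial, smul_eq_mul, mul_one]
  rw [← rieszLinearMap_apply, hsmul, map_smul, hbasis, smul_eq_mul]

theorem riesz_C_mul_X_pow_mul_X_pow (β : ℕ → ℕ → ℝ) (a : ℝ) (i j : ℕ) :
    riesz β (C a * X 0 ^ i * X 1 ^ j) = a * β i j := by
  have hmon : (C a * X 0 ^ i * X 1 ^ j : MvPolynomial (Fin 2) ℝ) =
      monomial (Finsupp.single 0 i + Finsupp.single 1 j) a := by
    simp only [X_pow_eq_monomial, C_mul_monomial, monomial_mul, mul_one]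
  rw [hmon, riesz_monomial]
  simp

theorem riesz_hpoly (β : ℕ → ℕ → ℝ) :
    riesz β hpoly
      = β 4 0 + 6 * β 1 0 - (11/2) * β 0 1 - 14 * β 2 0 + (43/2) * β 1 1
        - (17/2) * β 0 2 - β 2 1 + (1/2) * β 1 2 := by
  have hmon : hpoly = C 1 * X 0 ^ 4 * X 1 ^ 0 + C 6 * X 0 ^ 1 * X 1 ^ 0
      - C (11/2) * X 0 ^ 0 * X 1 ^ 1 - C 14 * X 0 ^ 2 * X 1 ^ 0 + C (43/2) * X 0 ^ 1 * X 1 ^ 1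
      - C (17/2) * X 0 ^ 0 * X 1 ^ 2 - C 1 * X 0 ^ 2 * X 1 ^ 1 + C (1/2) * X 0 ^ 1 * X 1 ^ 2 := by
    simp only [hpoly, map_one, pow_zero, pow_one, one_mul, mul_one]
  simp only [hmon, ← rieszLinearMap_apply, map_add, map_sub]
  simp only [rieszLinearMap_apply, riesz_C_mul_X_pow_mul_X_pow]
  ring

theorem riesz_hpoly_ne_zero_general (β : ℕ → ℕ → ℝ)
    (h10 : β 1 0 = 7/2) (h01 : β 0 1 = -67/8)
    (h20 : β 2 0 = 79/4) (h11 : β 1 1 = 1055/16) (h02 : β 0 2 = 18195/64)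
    (h21 : β 2 1 = -1935/32) (h12 : β 1 2 = -43115/128)
    (h40 : β 4 0 = 1055/16) :
    riesz β hpoly
      = β 4 0 + 6 * β 1 0 - (11/2) * β 0 1 - 14 * β 2 0 + (43/2) * β 1 1
        - (17/2) * β 0 2 - β 2 1 + (1/2) * β 1 2 ∧
    riesz β hpoly = -320081/256 ∧ riesz β hpoly ≠ 0 := by
  have hvalue : riesz β hpoly = -320081/256 := by
    rw [riesz_hpoly, h40, h10, h01, h20, h11, h02, h21, h12]
    norm_num
  exact ⟨riesz_hpoly β, hvalue, by rw [hvalue]; norm_num⟩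

/-- for the explicit moment sequence, `Λ_β(h) = −320081/256 ≠ 0`. -/
theorem riesz_hpoly_ne_zero (β : ℕ → ℕ → ℝ)
    (h00 : β 0 0 = 14) (h10 : β 1 0 = 7/2) (h01 : β 0 1 = -67/8)
    (h20 : β 2 0 = 79/4) (h11 : β 1 1 = 1055/16) (h02 : β 0 2 = 18195/64)
    (h30 : β 3 0 = -67/8) (h21 : β 2 1 = -1935/32) (h12 : β 1 2 = -43115/128)
    (h03 : β 0 3 = -926695/512)
    (h40 : β 4 0 = 1055/16) (h31 : β 3 1 = 18195/64) (h22 : β 2 2 = 336151/256)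
    (h13 : β 1 3 = 6407195/1024) (h04 : β 0 4 = 124731423/4096) :
    riesz β hpoly
      = β 4 0 + 6 * β 1 0 - (11/2) * β 0 1 - 14 * β 2 0 + (43/2) * β 1 1
        - (17/2) * β 0 2 - β 2 1 + (1/2) * β 1 2 ∧
    riesz β hpoly = -320081/256 ∧ riesz β hpoly ≠ 0 :=
  riesz_hpoly_ne_zero_general β h10 h01 h20 h11 h02 h21 h12 h40
end
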